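/- arXiv:2211.03281 — 3 statements merged into one kernel-verified Lean document; each statement's English description precedes it below -/
import Mathlib

section
/- (SF Projection Lemma, finite MDP form.) Let P be an N×N row-stochastic real matrix, 0 ≤ γ < 1, and let c* : Fin N → Fin m and c : Fin N → Fin n be clusterings such that c* s = c* s' implies c s = c s' for all states s, s'. Let Φ : Matrix (Fin n) (Fin m) ℝ be the projection matrix with Φ k l = 1 if there exists s with c s = k and c* s = l, else 0, and let E_c, E_{c*} be the one-hot indicator matrices of c and c*. Then (1 - γ • P)⁻¹ * E_c = ((1 - γ • P)⁻¹ * E_{c*}) * Φᵀ; that is, the clustered successor feature matrix of c equals that of c* multiplied by the transpose of the projection matrix. -/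
/-!
By associativity the claim reduces to `E_c = E_{c*} * Φᵀ`. Writing `E_f` as the rows `f s` of
the identity matrix, row `s` of `E_{c*} * Φᵀ` is row `c* s` of `Φᵀ`, and that row is the one-hot
vector of `c s` because the `c*`-cluster of `s` lies inside a single `c`-cluster.
-/

namespace Matrix

variable {ι α β R : Type*} [DecidableEq α] [NonAssocSemiring R]

theorem one_submatrix_apply_eq_ite (f : ι → α) (i : ι) (a : α) :
    (1 : Matrix α α R).submatrix f id i a = if f i = a then 1 else 0 :=
  one_apply

variable [Fintype α]

theorem one_submatrix_id_mul {n : Type*} (f : ι → α) (M : Matrix α n R) :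
    (1 : Matrix α α R).submatrix f id * M = M.submatrix f id := by
  simpa using one_submatrix_mul f (Equiv.refl α) M

theorem one_submatrix_eq_mul_transpose_of_factorsThrough {f : ι → α} {g : ι → β}
    [DecidableEq β] (hgf : g.FactorsThrough f) (Φ : Matrix β α R)
    [∀ b a, Decidable (∃ i, g i = b ∧ f i = a)]
    (hΦ : ∀ b a, Φ b a = if ∃ i, g i = b ∧ f i = a then 1 else 0) :
    (1 : Matrix β β R).submatrix g id = (1 : Matrix α α R).submatrix f id * Φᵀ := by
  have hfiber (i : ι) (b : β) : (∃ j, g j = b ∧ f j = f i) ↔ g i = b :=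
    ⟨fun ⟨j, hj, hji⟩ => (hgf hji.symm).trans hj, fun h => ⟨i, h, rfl⟩⟩
  ext i b
  rw [one_submatrix_id_mul, one_submatrix_apply_eq_ite, submatrix_apply, transpose_apply, hΦ]
  exact if_congr (hfiber i b).symm rfl rfl

end Matrix

open Classical in
theorem sf_projection_lemma_general
    (N m n : ℕ) (P : Matrix (Fin N) (Fin N) ℝ)
    (γ : ℝ)
    (cstar : Fin N → Fin m) (c : Fin N → Fin n)
    (hsub : ∀ s s' : Fin N, cstar s = cstar s' → c s = c s')
    (Φ : Matrix (Fin n) (Fin m) ℝ)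
    (hΦ : ∀ k l, Φ k l = if ∃ s, c s = k ∧ cstar s = l then 1 else 0)
    (E_c : Matrix (Fin N) (Fin n) ℝ)
    (hEc : ∀ s k, E_c s k = if c s = k then 1 else 0)
    (E_cstar : Matrix (Fin N) (Fin m) ℝ)
    (hEcstar : ∀ s l, E_cstar s l = if cstar s = l then 1 else 0) :
    (1 - γ • P)⁻¹ * E_c = ((1 - γ • P)⁻¹ * E_cstar) * Φ.transpose := by
  have hE_c : E_c = (1 : Matrix (Fin n) (Fin n) ℝ).submatrix c id :=
    Matrix.ext fun s k => (hEc s k).trans (Matrix.one_submatrix_apply_eq_ite c s k).symm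
  have hE_cstar : E_cstar = (1 : Matrix (Fin m) (Fin m) ℝ).submatrix cstar id :=
    Matrix.ext fun s l => (hEcstar s l).trans (Matrix.one_submatrix_apply_eq_ite cstar s l).symm
  rw [Matrix.mul_assoc, hE_c, hE_cstar,
    Matrix.one_submatrix_eq_mul_transpose_of_factorsThrough (fun s s' => hsub s s') Φ hΦ]

open Classical in
/-- SF Projection Lemma, finite MDP form: if `c` is a sub-clustering
of `c*`, then the clustered successor feature matrix of `c` equals that of `c*`
multiplied by the transpose of the projection matrix:
`(1 - γ • P)⁻¹ * E_c = ((1 - γ • P)⁻¹ * E_{c*}) * Φ.transpose`. -/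
theorem sf_projection_lemma
    (N m n : ℕ) (P : Matrix (Fin N) (Fin N) ℝ)
    (hP_nonneg : ∀ s s', 0 ≤ P s s')
    (hP_rowsum : ∀ s, ∑ s', P s s' = 1)
    (γ : ℝ) (hγ0 : 0 ≤ γ) (hγ1 : γ < 1)
    (cstar : Fin N → Fin m) (c : Fin N → Fin n)
    (hsub : ∀ s s' : Fin N, cstar s = cstar s' → c s = c s')
    (Φ : Matrix (Fin n) (Fin m) ℝ)
    (hΦ : ∀ k l, Φ k l = if ∃ s, c s = k ∧ cstar s = l then 1 else 0)
    (E_c : Matrix (Fin N) (Fin n) ℝ)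
    (hEc : ∀ s k, E_c s k = if c s = k then 1 else 0)
    (E_cstar : Matrix (Fin N) (Fin m) ℝ)
    (hEcstar : ∀ s l, E_cstar s l = if cstar s = l then 1 else 0) :
    (1 - γ • P)⁻¹ * E_c = ((1 - γ • P)⁻¹ * E_cstar) * Φ.transpose :=
  sf_projection_lemma_general N m n P γ cstar c hsub Φ hΦ E_c hEc E_cstar hEcstar
end

section
/- (Path-wise SF projection.) Let S be a type, c* : S → Fin m and c : S → Fin n clusterings with c* s = c* s' implying c s = c s' for all s, s', and Φ : Matrix (Fin n) (Fin m) ℝ the projection matrix with Φ k l = 1 if there exists s with c s = k and c* s = l, else 0. Then for every 0 ≤ γ < 1 and every sequence of states s : ℕ → S, the discounted series converge and Φ.mulVec (∑' t, γ^t • e_{c* (s t)}) = ∑' t, γ^t • e_{c (s t)}, where e_j denotes the one-hot vector in the appropriate dimension. -/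
/-!
Column `c* x` of the projection matrix has its only nonzero entry, a `1`, in row `c x`: every
state in the `c*`-cluster of `x` lies in the `c`-cluster of `x`. So `Φ` maps the one-hot vector
of `c* x` to that of `c x`. The discounted one-hot series converge absolutely, their terms being
bounded in norm by `γ ^ t`, and `Φ *ᵥ ·` is continuous and additive, hence commutes with the sum.
-/

open Matrix

theorem Matrix.mulVec_tsum {X m n R : Type*} [Fintype n] [NonUnitalNonAssocSemiring R]
    [TopologicalSpace R] [IsTopologicalSemiring R] [T2Space R] (M : Matrix m n R) {f : X → n → R}
    (hf : Summable f) : M *ᵥ ∑' x, f x = ∑' x, M *ᵥ f x :=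
  hf.map_tsum (mulVecBilin ℕ ℕ M) (continuous_const.matrix_mulVec continuous_id)

theorem summable_pow_smul_of_norm_le {E : Type*} [NormedAddCommGroup E] [NormedSpace ℝ E]
    [CompleteSpace E] {γ : ℝ} (hγ0 : 0 ≤ γ) (hγ1 : γ < 1) {v : ℕ → E} {C : ℝ}
    (hv : ∀ t, ‖v t‖ ≤ C) : Summable fun t => γ ^ t • v t :=
  .of_norm_bounded ((summable_geometric_of_lt_one hγ0 hγ1).mul_right C) fun t => by
    rw [norm_smul, norm_pow, Real.norm_of_nonneg hγ0]
    exact mul_le_mul_of_nonneg_left (hv t) (pow_nonneg hγ0 t)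

theorem summable_pow_smul_single {ι : Type*} [Fintype ι] [DecidableEq ι] {γ : ℝ} (hγ0 : 0 ≤ γ)
    (hγ1 : γ < 1) (e : ℕ → ι) : Summable fun t => γ ^ t • (Pi.single (e t) 1 : ι → ℝ) :=
  summable_pow_smul_of_norm_le hγ0 hγ1 (C := 1) fun t => by rw [Pi.norm_single, norm_one]

def IsSubClustering {S κ ι : Type*} (c : S → κ) (cstar : S → ι) : Prop :=
  ∀ s s', cstar s = cstar s' → c s = c s'

open Classical in
noncomputable def clusterProjection (R : Type*) [Zero R] [One R] {S κ ι : Type*} (c : S → κ)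
    (cstar : S → ι) : Matrix κ ι R :=
  of fun k l => if ∃ s, c s = k ∧ cstar s = l then 1 else 0

theorem IsSubClustering.clusterProjection_mulVec_single {R S κ ι : Type*} [NonAssocSemiring R]
    [Fintype ι] [DecidableEq ι] [DecidableEq κ] {c : S → κ} {cstar : S → ι}
    (hc : IsSubClustering c cstar) (x : S) :
    clusterProjection R c cstar *ᵥ Pi.single (cstar x) 1 = Pi.single (c x) 1 := by
  ext k
  have hcluster : (∃ s, c s = k ∧ cstar s = cstar x) ↔ k = c x :=
    ⟨fun ⟨s, hk, hs⟩ => hk ▸ hc s x hs, fun hk => ⟨x, hk.symm, rfl⟩⟩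
  simp [clusterProjection, Pi.single_apply, hcluster]

open Classical in
/-- path-wise SF projection: if `c` is a sub-clustering of `c*` with
projection matrix `Φ`, then for every `0 ≤ γ < 1` and every state sequence
`s : ℕ → S`, the discounted one-hot series converge and
`Φ.mulVec (∑' t, γ^t • e_{c* (s t)}) = ∑' t, γ^t • e_{c (s t)}`. -/
theorem pathwise_sf_projection
    (S : Type*) (m n : ℕ)
    (cstar : S → Fin m) (c : S → Fin n)
    (hsub : ∀ s s' : S, cstar s = cstar s' → c s = c s')
    (Φ : Matrix (Fin n) (Fin m) ℝ)
    (hΦ : ∀ k l, Φ k l = if ∃ s, c s = k ∧ cstar s = l then 1 else 0)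
    (γ : ℝ) (hγ0 : 0 ≤ γ) (hγ1 : γ < 1)
    (s : ℕ → S) :
    Summable (fun t : ℕ => γ ^ t • (fun l : Fin m => if l = cstar (s t) then (1 : ℝ) else 0)) ∧
    Summable (fun t : ℕ => γ ^ t • (fun k : Fin n => if k = c (s t) then (1 : ℝ) else 0)) ∧
    Φ.mulVec (∑' t : ℕ, γ ^ t • (fun l : Fin m => if l = cstar (s t) then (1 : ℝ) else 0))
      = ∑' t : ℕ, γ ^ t • (fun k : Fin n => if k = c (s t) then (1 : ℝ) else 0) := by
  have hΦ_eq : Φ = clusterProjection ℝ c cstar := Matrix.ext hΦ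
  have hone_hot : ∀ {ι : Type} [DecidableEq ι] (j : ι),
      (fun l => if l = j then (1 : ℝ) else 0) = Pi.single j 1 :=
    fun j => funext fun l => (Pi.single_apply j 1 l).symm
  simp only [hone_hot]
  refine ⟨summable_pow_smul_single hγ0 hγ1 _, summable_pow_smul_single hγ0 hγ1 _, ?_⟩
  rw [hΦ_eq, mulVec_tsum _ (summable_pow_smul_single hγ0 hγ1 _)]
  simp only [mulVec_smul, IsSubClustering.clusterProjection_mulVec_single hsub]
end

section
/- (Preservation of equal successor features, Equation (15).) Let P be an N×N row-stochastic real matrix, 0 ≤ γ < 1, and let c* : Fin N → Fin m and c : Fin N → Fin n be clusterings such that c* s = c* s' implies c s = c s' for all s, s'. Define Ψ_{c*} = (1 - γ • P)⁻¹ * E_{c*} and Ψ_c = (1 - γ • P)⁻¹ * E_c. If two states s, s̃ have equal rows in Ψ_{c*} (for all l, Ψ_{c*} s l = Ψ_{c*} s̃ l), then they also have equal rows in Ψ_c (for all k, Ψ_c s k = Ψ_c s̃ k). -/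
/-!
If `c` factors through `c*` as `c = g ∘ c*`, then `E_c = E_{c*} * E_g`, so
`Ψ_c = (1 - γ • P)⁻¹ * E_{c*} * E_g = Ψ_{c*} * E_g`: every row of `Ψ_c` is the image of the
corresponding row of `Ψ_{c*}` under the fixed matrix `E_g`, and equal rows stay equal.
-/

namespace Matrix

variable {ι κ μ R : Type*}

def clusterIndicator [Zero R] [One R] [DecidableEq κ] (c : ι → κ) : Matrix ι κ R :=
  of fun s k => if c s = k then 1 else 0

-- Without the ascriptions `R` is still unknown when `*` is elaborated, and the
-- `CStarMatrix` multiplication instance gets picked.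
theorem clusterIndicator_comp [NonAssocSemiring R] [Fintype κ] [DecidableEq κ] [DecidableEq μ]
    (f : ι → κ) (g : κ → μ) :
    (clusterIndicator (g ∘ f) : Matrix ι μ R) =
      (clusterIndicator f : Matrix ι κ R) * (clusterIndicator g : Matrix κ μ R) := by
  ext s k
  simp only [clusterIndicator, mul_apply, of_apply, Function.comp_apply, ite_mul, one_mul,
    zero_mul, Finset.sum_ite_eq, Finset.mem_univ, if_true]

theorem mul_row_eq_of_row_eq [Fintype κ] [Mul R] [AddCommMonoid R] {M : Matrix ι κ R}
    (Φ : Matrix κ μ R) {s t : ι} (h : M s = M t) : (M * Φ) s = (M * Φ) t := by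
  ext k
  simp only [mul_apply', h]

end Matrix

theorem equal_sf_preserved_under_subclustering_general
    (N m n : ℕ) (P : Matrix (Fin N) (Fin N) ℝ)
    (γ : ℝ)
    (cstar : Fin N → Fin m) (c : Fin N → Fin n)
    (hsub : ∀ s s' : Fin N, cstar s = cstar s' → c s = c s')
    (E_c : Matrix (Fin N) (Fin n) ℝ)
    (hEc : ∀ s k, E_c s k = if c s = k then 1 else 0)
    (E_cstar : Matrix (Fin N) (Fin m) ℝ)
    (hEcstar : ∀ s l, E_cstar s l = if cstar s = l then 1 else 0)
    (Ψstar : Matrix (Fin N) (Fin m) ℝ) (hΨstar : Ψstar = (1 - γ • P)⁻¹ * E_cstar)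
    (Ψ : Matrix (Fin N) (Fin n) ℝ) (hΨ : Ψ = (1 - γ • P)⁻¹ * E_c)
    (s st : Fin N) (heq : ∀ l, Ψstar s l = Ψstar st l) :
    ∀ k, Ψ s k = Ψ st k := by
  -- `c s` supplies the value of `g` off the range of `cstar`, where it is irrelevant.
  set g := Function.extend cstar c fun _ => c s
  have hg : g ∘ cstar = c := Function.FactorsThrough.extend_comp _ hsub
  have hE_c : E_c = Matrix.clusterIndicator c := Matrix.ext hEc
  have hE_cstar : E_cstar = Matrix.clusterIndicator cstar := Matrix.ext hEcstar
  have hΨ_factor : Ψ = Ψstar * (Matrix.clusterIndicator g : Matrix (Fin m) (Fin n) ℝ) := by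
    rw [hΨ, hΨstar, hE_c, hE_cstar, ← hg, Matrix.clusterIndicator_comp, Matrix.mul_assoc]
  rw [hΨ_factor]
  exact congrFun (Matrix.mul_row_eq_of_row_eq _ (funext heq))

/-- preservation of equal successor features, Equation (15): if `c` is
a sub-clustering of `c*` and two states have equal rows in the clustered successor
feature matrix `Ψ_{c*} = (1 - γ • P)⁻¹ * E_{c*}`, then they have equal rows in
`Ψ_c = (1 - γ • P)⁻¹ * E_c`. -/
theorem equal_sf_preserved_under_subclustering
    (N m n : ℕ) (P : Matrix (Fin N) (Fin N) ℝ)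
    (hP_nonneg : ∀ s s', 0 ≤ P s s')
    (hP_rowsum : ∀ s, ∑ s', P s s' = 1)
    (γ : ℝ) (hγ0 : 0 ≤ γ) (hγ1 : γ < 1)
    (cstar : Fin N → Fin m) (c : Fin N → Fin n)
    (hsub : ∀ s s' : Fin N, cstar s = cstar s' → c s = c s')
    (E_c : Matrix (Fin N) (Fin n) ℝ)
    (hEc : ∀ s k, E_c s k = if c s = k then 1 else 0)
    (E_cstar : Matrix (Fin N) (Fin m) ℝ)
    (hEcstar : ∀ s l, E_cstar s l = if cstar s = l then 1 else 0)
    (Ψstar : Matrix (Fin N) (Fin m) ℝ) (hΨstar : Ψstar = (1 - γ • P)⁻¹ * E_cstar)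
    (Ψ : Matrix (Fin N) (Fin n) ℝ) (hΨ : Ψ = (1 - γ • P)⁻¹ * E_c)
    (s st : Fin N) (heq : ∀ l, Ψstar s l = Ψstar st l) :
    ∀ k, Ψ s k = Ψ st k :=
  equal_sf_preserved_under_subclustering_general N m n P γ cstar c hsub E_c hEc E_cstar hEcstar
    Ψstar hΨstar Ψ hΨ s st heq
end
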